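/- For all m ≥ 1 and x ≥ 1 with 3m < 2x, d_{m,x} = 0; that is, there is no Ferrers diagram λ ⊆ ℕ^x with m + x + 1 elements containing μ_x, having reduced dimension x, and having no component of the skew diagram of type σ_2, when the density m/x is below 2/3. -/

import Mathlib

/-- A Ferrers diagram in `ℕ^k`: a finite nonempty downward-closed subset of `Fin k → ℕ`. -/
def IsFerrers {k : ℕ} (F : Finset (Fin k → ℕ)) : Prop :=
  F.Nonempty ∧ ∀ a ∈ F, ∀ x : Fin k → ℕ, (∀ i, x i ≤ a i) → x ∈ F

/-- A Ferrers diagram is strict if every coordinate is used by some element. -/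
def IsStrict {k : ℕ} (F : Finset (Fin k → ℕ)) : Prop :=
  ∀ i : Fin k, ∃ a ∈ F, a i ≠ 0

/-- `numPart d n` = `p_d(n)`, the number of Ferrers diagrams in `ℕ^(d+1)` with `n` elements. -/
noncomputable def numPart (d n : ℕ) : ℕ :=
  Nat.card {F : Finset (Fin (d + 1) → ℕ) // IsFerrers F ∧ F.card = n}

/-- `Amat n r` = `a_{n,r}`, the number of strict Ferrers diagrams in `ℕ^r` with `n` elements. -/
noncomputable def Amat (n r : ℕ) : ℕ :=
  Nat.card {F : Finset (Fin r → ℕ) // IsFerrers F ∧ IsStrict F ∧ F.card = n}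

/-- `mu r` = `μ_r = {0, e_1, …, e_r} ⊆ ℕ^r`. -/
def mu (r : ℕ) : Finset (Fin r → ℕ) :=
  insert 0 (Finset.univ.image fun i => Pi.single i 1)

/-- The reduced dimension of a Ferrers diagram `F ⊆ ℕ^x` (containing `μ_x`): the number of
coordinates used by some element of `F \ μ_x`. -/
noncomputable def rdim {x : ℕ} (F : Finset (Fin x → ℕ)) : ℕ :=
  Nat.card {i : Fin x // ∃ a ∈ F \ mu x, a i ≠ 0}

/-- Two coordinates are touched by a common element of the skew diagram `σ`. -/
def Touches {x : ℕ} (σ : Finset (Fin x → ℕ)) (i j : Fin x) : Prop :=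
  ∃ a ∈ σ, a i ≠ 0 ∧ a j ≠ 0

/-- `B` is a block of the finest partition of `Fin x` compatible with `σ`,
i.e. an equivalence class of the equivalence relation generated by `Touches σ`. -/
def IsBlock {x : ℕ} (σ : Finset (Fin x → ℕ)) (B : Set (Fin x)) : Prop :=
  ∃ i : Fin x, B = {j | Relation.EqvGen (Touches σ) i j}

/-- The support of `a` is contained in `B`. -/
def SuppIn {x : ℕ} (a : Fin x → ℕ) (B : Set (Fin x)) : Prop :=
  ∀ i, a i ≠ 0 → i ∈ B

/-- The component of `σ` with block `B` is of type `σ₂`: `B = {i, j}` with `i ≠ j`, and the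
elements of `σ` supported in `B` are exactly `{e_i + e_j}`. -/
def IsSigma2 {x : ℕ} (σ : Finset (Fin x → ℕ)) (B : Set (Fin x)) : Prop :=
  ∃ i j : Fin x, i ≠ j ∧ B = {i, j} ∧
    {a ∈ (σ : Set (Fin x → ℕ)) | SuppIn a B} = {Pi.single i 1 + Pi.single j 1}

/-- `Cmat m x` = `c_{m,x}`. -/
noncomputable def Cmat (m x : ℕ) : ℕ :=
  Nat.card {F : Finset (Fin x → ℕ) //
    IsFerrers F ∧ mu x ⊆ F ∧ F.card = m + x + 1 ∧ rdim F = x}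

/-- `Dmat m x` = `d_{m,x}`. -/
noncomputable def Dmat (m x : ℕ) : ℕ :=
  Nat.card {F : Finset (Fin x → ℕ) //
    IsFerrers F ∧ mu x ⊆ F ∧ F.card = m + x + 1 ∧ rdim F = x ∧
      ∀ B : Set (Fin x), IsBlock (F \ mu x) B → ¬ IsSigma2 (F \ mu x) B}

/-- A point of type 1: `e_i + e_j` for some `i ≠ j`. -/
def IsType1 {r : ℕ} (a : Fin r → ℕ) : Prop :=
  ∃ i j : Fin r, i ≠ j ∧ a = Pi.single i 1 + Pi.single j 1

/-- A point of type 2: `2·e_i` for some `i`. -/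
def IsType2 {r : ℕ} (a : Fin r → ℕ) : Prop :=
  ∃ i : Fin r, a = Pi.single i 2

/-- `Fmat n r` = `f_{n,r}`. -/
noncomputable def Fmat (n r : ℕ) : ℕ :=
  Nat.card {F : Finset (Fin r → ℕ) //
    IsFerrers F ∧ mu r ⊆ F ∧ F.card = n ∧
      ∀ B : Set (Fin r), IsBlock (F \ mu r) B →
        ∃ a ∈ F \ mu r, SuppIn a B ∧ ¬ IsType1 a}

/-! The skew diagram `σ = λ \ μ_x` contains `e_i + e_j` whenever `i ≠ j` both lie in the support
of one of its elements, so the blocks of `σ` are the connected components of the graph on the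
coordinates whose edges are the elements `e_i + e_j ∈ σ`. A block with `b` coordinates therefore
carries at least `b - 1` elements of `σ` (a spanning tree), at least one since every coordinate is
used, and at least two when `b = 2` since it is not of type `σ₂`; in each case `2b ≤ 3·#elements`.
Summing over the blocks gives `2x ≤ 3m`. -/

open SimpleGraph

lemma SimpleGraph.card_eq_sum_card_supp {V : Type*} [Finite V] (G : SimpleGraph V)
    [Fintype G.ConnectedComponent] : Nat.card V = ∑ C : G.ConnectedComponent, Nat.card C.supp := by
  rw [← Nat.card_sigma]
  exact Nat.card_congr (Equiv.sigmaFiberEquiv G.connectedComponentMk).symm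

section PairVector

variable {ι : Type*} [DecidableEq ι]

def pairVec : Sym2 ι → ι → ℕ :=
  Sym2.lift ⟨fun i j => Pi.single i 1 + Pi.single j 1, fun _ _ => add_comm _ _⟩

@[simp]
lemma pairVec_mk (i j : ι) : pairVec s(i, j) = Pi.single i 1 + Pi.single j 1 := rfl

lemma pairVec_injective : Function.Injective (pairVec : Sym2 ι → ι → ℕ) := by
  intro e f h
  induction e using Sym2.ind
  induction f using Sym2.ind
  simpa [Sym2.eq_iff, Pi.single_add_single_eq_single_add_single, or_comm] using h

lemma pairVec_apply_ne_zero {e : Sym2 ι} {k : ι} : pairVec e k ≠ 0 ↔ k ∈ e := by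
  induction e using Sym2.ind
  simp only [pairVec_mk, Pi.add_apply, Pi.single_apply, Sym2.mem_iff]
  split_ifs <;> simp_all

lemma single_one_injective : Function.Injective fun i : ι => (Pi.single i 1 : ι → ℕ) :=
  fun i j h => by simpa [Pi.single_apply] using congrFun h i

lemma pairVec_le {a : ι → ℕ} {i j : ι} (hi : a i ≠ 0) (hj : a j ≠ 0) (hij : i ≠ j) (k : ι) :
    pairVec s(i, j) k ≤ a k := by
  simp only [pairVec_mk, Pi.add_apply, Pi.single_apply]
  split_ifs <;> grind

end PairVector

section SkewGraph

variable {x : ℕ} (σ : Finset (Fin x → ℕ))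

def skewGraph : SimpleGraph (Fin x) :=
  fromEdgeSet {e | pairVec e ∈ σ}

def PairClosed : Prop :=
  ∀ a ∈ σ, ∀ i j, a i ≠ 0 → a j ≠ 0 → i ≠ j → pairVec s(i, j) ∈ σ

variable {σ}

lemma skewGraph_adj {i j : Fin x} : (skewGraph σ).Adj i j ↔ pairVec s(i, j) ∈ σ ∧ i ≠ j :=
  fromEdgeSet_adj _

lemma touches_of_adj {i j : Fin x} (h : (skewGraph σ).Adj i j) : Touches σ i j :=
  ⟨_, (skewGraph_adj.1 h).1, pairVec_apply_ne_zero.2 (Sym2.mem_mk_left i j),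
    pairVec_apply_ne_zero.2 (Sym2.mem_mk_right i j)⟩

lemma PairClosed.reachable_of_touches (hσ : PairClosed σ) {i j : Fin x} (h : Touches σ i j) :
    (skewGraph σ).Reachable i j := by
  obtain ⟨a, ha, hi, hj⟩ := h
  rcases eq_or_ne i j with rfl | hij
  · rfl
  · exact (skewGraph_adj.2 ⟨hσ a ha i j hi hj hij, hij⟩).reachable

lemma PairClosed.eqvGen_touches_iff_reachable (hσ : PairClosed σ) {i j : Fin x} :
    Relation.EqvGen (Touches σ) i j ↔ (skewGraph σ).Reachable i j := by
  refine ⟨fun h => ?_, fun h => ?_⟩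
  · induction h with
    | rel _ _ h => exact hσ.reachable_of_touches h
    | refl => rfl
    | symm _ _ _ ih => exact ih.symm
    | trans _ _ _ _ _ ih₁ ih₂ => exact ih₁.trans ih₂
  · obtain ⟨p⟩ := h
    induction p with
    | nil => exact .refl _
    | cons h _ ih => exact .trans _ _ _ (.rel _ _ (touches_of_adj h)) ih

lemma PairClosed.isBlock_supp (hσ : PairClosed σ) (C : (skewGraph σ).ConnectedComponent) :
    IsBlock σ C.supp := by
  induction C using ConnectedComponent.ind with
  | h i =>
    refine ⟨i, Set.ext fun j => ?_⟩
    rw [ConnectedComponent.mem_supp_iff, ConnectedComponent.eq, Set.mem_ofPred_eq,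
      hσ.eqvGen_touches_iff_reachable, reachable_comm]

lemma PairClosed.suppIn_supp (hσ : PairClosed σ) {a : Fin x → ℕ} (ha : a ∈ σ) {i : Fin x}
    (hi : a i ≠ 0) : SuppIn a ((skewGraph σ).connectedComponentMk i).supp := fun _ hj =>
  ConnectedComponent.eq.2 (hσ.reachable_of_touches ⟨a, ha, hj, hi⟩)

end SkewGraph

section SkewComponent

variable {x : ℕ} {σ : Finset (Fin x → ℕ)}

open Classical in
variable (σ) in
noncomputable def skewComponent (C : (skewGraph σ).ConnectedComponent) : Finset (Fin x → ℕ) :=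
  σ.filter fun a => SuppIn a C.supp

lemma coe_skewComponent (C : (skewGraph σ).ConnectedComponent) :
    (skewComponent σ C : Set (Fin x → ℕ)) = {a ∈ (σ : Set (Fin x → ℕ)) | SuppIn a C.supp} := by
  classical
  simp [skewComponent]

lemma mem_skewComponent {C : (skewGraph σ).ConnectedComponent} {a : Fin x → ℕ} :
    a ∈ skewComponent σ C ↔ a ∈ σ ∧ SuppIn a C.supp := by
  rw [← Finset.mem_coe, coe_skewComponent]
  rfl

lemma pairVec_mem_skewComponent {C : (skewGraph σ).ConnectedComponent} {u v : Fin x}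
    (hu : u ∈ C.supp) (hv : v ∈ C.supp) (huv : (skewGraph σ).Adj u v) :
    pairVec s(u, v) ∈ skewComponent σ C := by
  refine mem_skewComponent.2 ⟨(skewGraph_adj.1 huv).1, fun k hk => ?_⟩
  rcases Sym2.mem_iff.1 (pairVec_apply_ne_zero.1 hk) with rfl | rfl <;> assumption

lemma PairClosed.card_eq_sum_card_skewComponent (hσ : PairClosed σ) (h0 : 0 ∉ σ) :
    σ.card = ∑ C, (skewComponent σ C).card := by
  rw [← Finset.card_biUnion]
  · congr 1
    ext a
    simp only [Finset.mem_biUnion, Finset.mem_univ, true_and, mem_skewComponent]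
    refine ⟨fun ha => ?_, fun ⟨_, ha, _⟩ => ha⟩
    obtain ⟨i, hi⟩ := Function.ne_iff.1 (ne_of_mem_of_not_mem ha h0)
    exact ⟨_, ha, hσ.suppIn_supp ha hi⟩
  · intro C _ D _ hCD
    refine Finset.disjoint_left.2 fun a haC haD => hCD ?_
    obtain ⟨ha, hC⟩ := mem_skewComponent.1 haC
    obtain ⟨i, hi⟩ := Function.ne_iff.1 (ne_of_mem_of_not_mem ha h0)
    exact (hC i hi).symm.trans ((mem_skewComponent.1 haD).2 i hi)

lemma card_edgeSet_le_card_skewComponent (C : (skewGraph σ).ConnectedComponent) :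
    Nat.card C.toSimpleGraph.edgeSet ≤ (skewComponent σ C).card := by
  have hmem (e : C.toSimpleGraph.edgeSet) :
      pairVec (e.1.map Subtype.val) ∈ skewComponent σ C := by
    obtain ⟨e, he⟩ := e
    induction e using Sym2.ind with
    | h u v => exact pairVec_mem_skewComponent u.2 v.2 he
  rw [← Nat.card_eq_finsetCard]
  refine Nat.card_le_card_of_injective (fun e => ⟨_, hmem e⟩) fun e f hef => ?_
  exact Subtype.ext (Sym2.map.injective Subtype.val_injective
    (pairVec_injective (congrArg Subtype.val hef)))

lemma card_supp_le_card_skewComponent_add_one (C : (skewGraph σ).ConnectedComponent) :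
    Nat.card C.supp ≤ (skewComponent σ C).card + 1 :=
  C.connected_toSimpleGraph.card_vert_le_card_edgeSet_add_one.trans
    (Nat.add_le_add_right (card_edgeSet_le_card_skewComponent C) 1)

lemma PairClosed.one_le_card_skewComponent (hσ : PairClosed σ)
    (hcov : ∀ i, ∃ a ∈ σ, a i ≠ 0) (C : (skewGraph σ).ConnectedComponent) :
    1 ≤ (skewComponent σ C).card := by
  obtain ⟨i, rfl⟩ := C.exists_rep
  obtain ⟨a, ha, hi⟩ := hcov i
  exact Finset.card_pos.2 ⟨a, mem_skewComponent.2 ⟨ha, hσ.suppIn_supp ha hi⟩⟩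

lemma isSigma2_of_card_supp_eq_two {C : (skewGraph σ).ConnectedComponent}
    (hC : Nat.card C.supp = 2) (hcard : (skewComponent σ C).card ≤ 1) :
    IsSigma2 σ C.supp := by
  have : Nontrivial C.supp := Finite.one_lt_card_iff_nontrivial.1 (by omega)
  obtain ⟨u, hu⟩ := C.nonempty_supp
  obtain ⟨⟨v, hv⟩, huv⟩ := C.connected_toSimpleGraph.preconnected.exists_adj_of_nontrivial ⟨u, hu⟩
  have huv : (skewGraph σ).Adj u v := huv
  have hsupp : C.supp = {u, v} := by
    refine (Set.eq_of_subset_of_ncard_le (Set.insert_subset hu (Set.singleton_subset_iff.2 hv))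
      ?_).symm
    rw [Set.ncard_pair huv.ne, ← Nat.card_coe_set_eq, hC]
  have hcomp : skewComponent σ C = {pairVec s(u, v)} := by
    have hp := pairVec_mem_skewComponent hu hv huv
    exact Finset.eq_singleton_iff_unique_mem.2 ⟨hp, fun b hb => Finset.card_le_one.1 hcard b hb _ hp⟩
  exact ⟨u, v, huv.ne, hsupp, by rw [← coe_skewComponent, hcomp, Finset.coe_singleton, pairVec_mk]⟩

end SkewComponent

section Counting

variable {x : ℕ} {σ : Finset (Fin x → ℕ)}

lemma PairClosed.two_mul_card_supp_le (hσ : PairClosed σ) (hcov : ∀ i, ∃ a ∈ σ, a i ≠ 0)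
    {C : (skewGraph σ).ConnectedComponent} (hC : ¬ IsSigma2 σ C.supp) :
    2 * Nat.card C.supp ≤ 3 * (skewComponent σ C).card := by
  have h₁ := hσ.one_le_card_skewComponent hcov C
  have h₂ := card_supp_le_card_skewComponent_add_one C
  have h₃ : Nat.card C.supp = 2 → 2 ≤ (skewComponent σ C).card := fun h =>
    not_lt.1 fun hlt => hC (isSigma2_of_card_supp_eq_two h (by omega))
  omega

lemma PairClosed.two_mul_le_three_mul_card (hσ : PairClosed σ) (h0 : 0 ∉ σ)
    (hcov : ∀ i, ∃ a ∈ σ, a i ≠ 0) (hno : ∀ B, IsBlock σ B → ¬ IsSigma2 σ B) :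
    2 * x ≤ 3 * σ.card := by
  calc 2 * x = ∑ C, 2 * Nat.card C.supp := by
        rw [← Finset.mul_sum, ← card_eq_sum_card_supp, Nat.card_fin]
    _ ≤ ∑ C, 3 * (skewComponent σ C).card :=
        Finset.sum_le_sum fun C _ => hσ.two_mul_card_supp_le hcov (hno _ (hσ.isBlock_supp C))
    _ = 3 * σ.card := by rw [← Finset.mul_sum, ← hσ.card_eq_sum_card_skewComponent h0]

end Counting

section Ferrers

variable {x : ℕ} {F : Finset (Fin x → ℕ)}

lemma card_mu (x : ℕ) : (mu x).card = x + 1 := by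
  rw [mu, Finset.card_insert_of_notMem, Finset.card_image_of_injective _ single_one_injective,
    Finset.card_univ, Fintype.card_fin]
  simp [eq_comm]

lemma pairVec_notMem_mu {i j : Fin x} (hij : i ≠ j) : pairVec s(i, j) ∉ mu x := by
  simp only [mu, Finset.mem_insert, Finset.mem_image, Finset.mem_univ, true_and, not_or, not_exists]
  refine ⟨fun h => pairVec_apply_ne_zero.2 (Sym2.mem_mk_left i j) (congrFun h i), fun k h => ?_⟩
  have hk (l : Fin x) (hl : l ∈ s(i, j)) : l = k := by
    by_contra hlk
    exact pairVec_apply_ne_zero.2 hl (by rw [← h, Pi.single_eq_of_ne hlk])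
  exact hij ((hk i (Sym2.mem_mk_left i j)).trans (hk j (Sym2.mem_mk_right i j)).symm)

lemma IsFerrers.pairClosed_sdiff_mu (hF : IsFerrers F) : PairClosed (F \ mu x) := by
  intro a ha i j hi hj hij
  rw [Finset.mem_sdiff] at ha ⊢
  exact ⟨hF.2 a ha.1 _ (pairVec_le hi hj hij), pairVec_notMem_mu hij⟩

lemma exists_mem_sdiff_mu_apply_ne_zero (hF : rdim F = x) (i : Fin x) :
    ∃ a ∈ F \ mu x, a i ≠ 0 := by
  by_contra hi
  have := Fintype.card_subtype_lt (p := fun i => ∃ a ∈ F \ mu x, a i ≠ 0) hi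
  rw [rdim, Nat.card_eq_fintype_card] at hF
  simp_all

end Ferrers

theorem statement10_general (m x : ℕ) (h : 3 * m < 2 * x) :
    Dmat m x = 0 := by
  refine Nat.card_eq_zero.2 (.inl ⟨fun ⟨F, hF, hmu, hcard, hrdim, hblocks⟩ => ?_⟩)
  have hcardσ : (F \ mu x).card = m := by
    rw [Finset.card_sdiff_of_subset hmu, hcard, card_mu]
    omega
  have := hF.pairClosed_sdiff_mu.two_mul_le_three_mul_card
    (fun h0 => (Finset.mem_sdiff.1 h0).2 (Finset.mem_insert_self _ _))
    (exists_mem_sdiff_mu_apply_ne_zero hrdim) hblocks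
  omega

/-- `d_{m,x} = 0` for all `m ≥ 1`, `x ≥ 1` with `3m < 2x`. -/
theorem statement10 (m x : ℕ) (hm : 1 ≤ m) (hx : 1 ≤ x) (h : 3 * m < 2 * x) :
    Dmat m x = 0 :=
  statement10_general m x h
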